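/- If f : [0,1] → [0,∞] is continuous, satisfies f(0) = 0, f(1) = ∞, and f(a + b - ab) = f(a) + f(b) for all a, b ∈ [0,1], and f is finite and strictly positive on (0,1), then there exists k > 0 such that f(s) = -k·log(1-s) for all s ∈ [0,1). -/
import Mathlib

open scoped ENNReal

/-- Uniqueness: every continuous homomorphism f from ([0,1], ⊕) with a ⊕ b = a + b - ab
to ([0,∞], +) with f(0) = 0, f(1) = ∞, finite and strictly positive on (0,1), is of the
form f(s) = -k log(1-s) for some k > 0. -/
theorem oplus_hom_classification (f : ℝ → ℝ≥0∞)
    (hcont : ContinuousOn f (Set.Icc (0 : ℝ) 1))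
    (h0 : f 0 = 0) (h1 : f 1 = ⊤)
    (hadd : ∀ a ∈ Set.Icc (0 : ℝ) 1, ∀ b ∈ Set.Icc (0 : ℝ) 1,
      f (a + b - a * b) = f a + f b)
    (hfin : ∀ s ∈ Set.Ioo (0 : ℝ) 1, f s ≠ ⊤ ∧ 0 < f s) :
    ∃ k : ℝ, 0 < k ∧ ∀ s ∈ Set.Ico (0 : ℝ) 1,
      f s = ENNReal.ofReal (-k * Real.log (1 - s)) := by
  -- f is finite on [0,1)
  have hne : ∀ s ∈ Set.Ico (0:ℝ) 1, f s ≠ ⊤ := by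
    rintro s ⟨hs0, hs1⟩
    rcases eq_or_lt_of_le hs0 with h | h
    · rw [← h, h0]; exact ENNReal.zero_ne_top
    · exact (hfin s ⟨h, hs1⟩).1
  set φ : ℝ → ℝ := fun t => (f (1 - Real.exp (-t))).toReal with hφ
  have hmem : ∀ t : ℝ, 0 ≤ t → (1 - Real.exp (-t)) ∈ Set.Ico (0:ℝ) 1 := by
    intro t ht
    constructor
    · have : Real.exp (-t) ≤ 1 := Real.exp_le_one_iff.mpr (by linarith)
      linarith
    · have := Real.exp_pos (-t)
      linarith
  have hφadd : ∀ t u : ℝ, 0 ≤ t → 0 ≤ u → φ (t + u) = φ t + φ u := by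
    intro t u ht hu
    have ha := hmem t ht
    have hb := hmem u hu
    have key : (1 - Real.exp (-t)) + (1 - Real.exp (-u))
        - (1 - Real.exp (-t)) * (1 - Real.exp (-u)) = 1 - Real.exp (-(t + u)) := by
      rw [neg_add, Real.exp_add]; ring
    have h2 := hadd _ (Set.Ico_subset_Icc_self ha) _ (Set.Ico_subset_Icc_self hb)
    rw [key] at h2
    simp only [hφ]
    rw [h2, ENNReal.toReal_add (hne _ ha) (hne _ hb)]
  have hφnn : ∀ t : ℝ, 0 ≤ φ t := fun t => ENNReal.toReal_nonneg
  have hmono : ∀ t u : ℝ, 0 ≤ t → t ≤ u → φ t ≤ φ u := by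
    intro t u ht htu
    have h2 := hφadd t (u - t) ht (by linarith)
    have h3 := hφnn (u - t)
    have : t + (u - t) = u := by ring
    rw [this] at h2
    linarith
  -- nat scaling
  have hnat : ∀ n : ℕ, ∀ t : ℝ, 0 ≤ t → φ (n * t) = n * φ t := by
    intro n
    induction n with
    | zero =>
        intro t ht
        simp only [Nat.cast_zero, zero_mul]
        have := hφadd 0 0 le_rfl le_rfl
        simp at this
        linarith [this]
    | succ n ih =>
        intro t ht
        have h2 : ((n : ℝ) + 1) * t = (n : ℝ) * t + t := by ring
        push_cast
        rw [h2, hφadd ((n : ℝ) * t) t (by positivity) ht, ih t ht]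
        ring
  set k : ℝ := φ 1 with hk
  -- rational scaling
  have hrat : ∀ q : ℚ, 0 ≤ q → φ (q : ℝ) = k * (q : ℝ) := by
    intro q hq
    have hden : (0:ℝ) < (q.den : ℝ) := by positivity
    have hqr : (0:ℝ) ≤ (q : ℝ) := by exact_mod_cast hq
    have hnum : ((q.num.toNat : ℝ)) = (q.num : ℝ) := by
      have h := Int.toNat_of_nonneg (Rat.num_nonneg.mpr hq)
      exact_mod_cast congrArg (Int.cast : ℤ → ℝ) h
    have hqd : (q.den : ℝ) * (q : ℝ) = (q.num.toNat : ℝ) := by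
      have h2 : ((q : ℝ)) = (q.num : ℝ) / (q.den : ℝ) := by rw [Rat.cast_def]
      rw [h2, hnum]
      field_simp
    have h1 : φ ((q.den : ℝ) * (q : ℝ)) = (q.den : ℝ) * φ (q : ℝ) := hnat q.den _ hqr
    have h2 : φ ((q.num.toNat : ℝ) * 1) = (q.num.toNat : ℝ) * k := hnat q.num.toNat 1 zero_le_one
    rw [mul_one] at h2
    rw [hqd, h2] at h1
    have h3 : (q.den:ℝ) * φ (q:ℝ) = (q.den:ℝ) * (k * (q:ℝ)) := by
      rw [← h1]; linear_combination (-k) * hqd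
    exact mul_left_cancel₀ (ne_of_gt hden) h3
  -- k > 0
  have hk0 : 0 < k := by
    have hmem1 : (1 - Real.exp (-1)) ∈ Set.Ioo (0:ℝ) 1 := by
      constructor
      · have : Real.exp (-1) < 1 := Real.exp_lt_one_iff.mpr (by norm_num)
        linarith
      · have := Real.exp_pos (-1:ℝ)
        linarith
    obtain ⟨hfin1, hpos1⟩ := hfin _ hmem1
    exact ENNReal.toReal_pos (ne_of_gt hpos1) hfin1
  -- linearity on [0,∞)
  have hlin : ∀ t : ℝ, 0 ≤ t → φ t = k * t := by
    intro t ht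
    by_contra hne2
    rcases lt_or_gt_of_ne hne2 with hlt | hgt
    · -- φ t < k t ; pick rational q with φ t / k < q < t
      obtain ⟨q, hq1, hq2⟩ := exists_rat_btwn (show φ t / k < t by
        rw [div_lt_iff₀ hk0]; linarith)
      have hq0 : (0:ℝ) ≤ (q : ℝ) := le_trans (by positivity) hq1.le
      have := hmono (q : ℝ) t hq0 hq2.le
      rw [hrat q (by exact_mod_cast hq0)] at this
      have : (q : ℝ) ≤ φ t / k := by
        rw [le_div_iff₀ hk0]; linarith
      linarith
    · obtain ⟨q, hq1, hq2⟩ := exists_rat_btwn (show t < φ t / k by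
        rw [lt_div_iff₀ hk0]; linarith)
      have hq0 : (0:ℝ) ≤ (q : ℝ) := le_trans ht hq1.le
      have := hmono t (q : ℝ) ht hq1.le
      rw [hrat q (by exact_mod_cast hq0)] at this
      have : φ t / k ≤ (q : ℝ) := by
        rw [div_le_iff₀ hk0]; linarith
      linarith
  refine ⟨k, hk0, ?_⟩
  rintro s ⟨hs0, hs1⟩
  rcases eq_or_lt_of_le hs0 with h | h
  · rw [← h, h0]
    simp [Real.log_one]
  · set t : ℝ := -Real.log (1 - s) with htdef
    have h1s : (0:ℝ) < 1 - s := by linarith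
    have h1s' : 1 - s < 1 := by linarith
    have htpos : 0 < t := by
      have : Real.log (1 - s) < 0 := Real.log_neg h1s h1s'
      simp only [htdef]; linarith
    have hexp : 1 - Real.exp (-t) = s := by
      simp only [htdef, neg_neg]
      rw [Real.exp_log h1s]; ring
    have hφt : φ t = k * t := hlin t htpos.le
    have hφt2 : φ t = (f s).toReal := by simp only [hφ, hexp]
    have hfs : f s = ENNReal.ofReal (k * t) := by
      rw [← hφt, hφt2, ENNReal.ofReal_toReal (hne s ⟨hs0, hs1⟩)]
    rw [hfs]
    congr 1
    simp only [htdef]; ring
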